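/- For any affine-linear function f(x) = C^T x + s on [a,b]^d, there exists a one-layer spiking neural network with d+1 input neurons (one auxiliary with constant firing time T_in) and one output neuron that realizes f on [a,b]^d, using weights w_i = c_i for i ≤ d, auxiliary weight w_{d+1} = 1 − ∑_i c_i, common delay d′, threshold θ = (1 + d‖C‖_∞) max{|a|,|b|} + s + |s|, and output reference time T_out = θ − s + T_in + d′. -/

import Mathlib

/-- `FiresAt w dl θ t τ`: SRM neuron with weights `w`, delays `dl`, threshold `θ`
fires at time `τ` on input firing times `t` (nonempty causal subset with positive
weight sum, arrival/firing order constraints, SRM firing-time formula). -/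
def FiresAt {n : ℕ} (w dl : Fin n → ℝ) (θ : ℝ) (t : Fin n → ℝ) (τ : ℝ) : Prop :=
  ∃ S : Finset (Fin n), S.Nonempty ∧ 0 < ∑ i ∈ S, w i ∧
    (∀ k ∈ S, t k + dl k < τ) ∧ (∀ k ∉ S, τ ≤ t k + dl k) ∧
    τ = (θ + ∑ i ∈ S, w i * (t i + dl i)) / (∑ i ∈ S, w i)

set_option maxHeartbeats 1000000 in
/-- the one-layer SNN with `d+1` input neurons (the genuine inputs
firing at `T_in + x_i`, one auxiliary firing at `T_in`), weights `w_i = c_i` and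
`w_{d+1} = 1 − ∑ c_i`, common delay `d'`, threshold
`θ = (1 + d‖C‖_∞) max{|a|,|b|} + s + |s|` and output reference time
`T_out = θ − s + T_in + d'` realizes the affine function `f(x) = Cᵀx + s` on
`[a,b]^d`: its output neuron fires at `T_out + f(x)`. -/
theorem stmt15 (d : ℕ) (C : Fin d → ℝ) (s a b Tin d' : ℝ) (hab : a < b) (hd' : 0 ≤ d') :
    ∀ x : Fin d → ℝ, (∀ i, x i ∈ Set.Icc a b) →
      FiresAt
        (fun i : Fin (d+1) => if h : (i : ℕ) < d then C ⟨i, h⟩ else 1 - ∑ j, C j)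
        (fun _ => d')
        ((1 + (d : ℝ) * (⨆ i, |C i|)) * max |a| |b| + s + |s|)
        (fun i : Fin (d+1) => if h : (i : ℕ) < d then Tin + x ⟨i, h⟩ else Tin)
        ((((1 + (d : ℝ) * (⨆ i, |C i|)) * max |a| |b| + s + |s|) - s + Tin + d')
          + ((∑ i, C i * x i) + s)) := by
  intro x hx
  classical
  set K := ⨆ i, |C i| with hKdef
  set M := max |a| |b| with hMdef
  have hM : 0 < M := by
    by_contra h
    push_neg at h
    have ha : |a| ≤ 0 := le_trans (le_max_left _ _) h
    have hb : |b| ≤ 0 := le_trans (le_max_right _ _) h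
    have h1 : a = 0 := abs_eq_zero.mp (le_antisymm ha (abs_nonneg a))
    have h2 : b = 0 := abs_eq_zero.mp (le_antisymm hb (abs_nonneg b))
    linarith
  have hCK : ∀ j, |C j| ≤ K := by
    intro j
    rw [hKdef]
    exact le_ciSup (Set.Finite.bddAbove (Set.finite_range (fun i => |C i|))) j
  have hK0 : 0 ≤ K := by
    rcases Nat.eq_zero_or_pos d with hd | hd
    · subst hd
      rw [hKdef, Real.iSup_of_isEmpty]
    · exact le_trans (abs_nonneg _) (hCK ⟨0, hd⟩)
  have hxM : ∀ j, |x j| ≤ M := by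
    intro j
    obtain ⟨h1, h2⟩ := hx j
    rw [abs_le]
    refine ⟨?_, ?_⟩
    · have := neg_abs_le a
      have := le_max_left |a| |b|
      linarith
    · have := le_abs_self b
      have := le_max_right |a| |b|
      linarith
  have hterm : ∀ j, -(K * M) ≤ C j * x j := by
    intro j
    have h1 : |C j * x j| ≤ K * M := by
      rw [abs_mul]
      exact mul_le_mul (hCK j) (hxM j) (abs_nonneg _) hK0
    have := neg_abs_le (C j * x j)
    linarith
  set E := ∑ j, C j * x j with hEdef
  have hE : -((d : ℝ) * K * M) ≤ E := by
    rw [hEdef]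
    calc -((d : ℝ) * K * M) = ∑ _j : Fin d, -(K * M) := by
          rw [Finset.sum_const, Finset.card_univ, Fintype.card_fin]
          push_cast
          ring
      _ ≤ ∑ j, C j * x j := Finset.sum_le_sum (fun j _ => hterm j)
  have hs : 0 ≤ s + |s| := by
    have := neg_abs_le s
    linarith
  set θ := (1 + (d : ℝ) * K) * M + s + |s| with hθdef
  set τ := (θ - s + Tin + d') + (E + s) with hτdef
  have hτ : τ = θ + Tin + d' + E := by rw [hτdef]; ring
  have hMθE : M ≤ θ + E := by
    rw [hθdef]
    nlinarith [hE, hs]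
  -- the two neuron functions
  set wf : Fin (d+1) → ℝ :=
    fun i => if h : (i : ℕ) < d then C ⟨i, h⟩ else 1 - ∑ j, C j with hwf
  set tf : Fin (d+1) → ℝ :=
    fun i => if h : (i : ℕ) < d then Tin + x ⟨i, h⟩ else Tin with htf
  have hwc : ∀ i : Fin d, wf i.castSucc = C i := by
    intro i
    simp [hwf, i.is_lt]
  have htc : ∀ i : Fin d, tf i.castSucc = Tin + x i := by
    intro i
    simp [htf, i.is_lt]
  have hwl : wf (Fin.last d) = 1 - ∑ j, C j := by simp [hwf]
  have htl : tf (Fin.last d) = Tin := by simp [htf]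
  have hWsum : ∑ i, wf i = 1 := by
    rw [Fin.sum_univ_castSucc, hwl, Finset.sum_congr rfl (fun i _ => hwc i)]
    ring
  have hWTsum : ∑ i, wf i * (tf i + d') = Tin + d' + E := by
    rw [Fin.sum_univ_castSucc, hwl, htl]
    have : ∀ i : Fin d, wf i.castSucc * (tf i.castSucc + d')
        = C i * (Tin + d') + C i * x i := by
      intro i
      rw [hwc, htc]
      ring
    rw [Finset.sum_congr rfl (fun i _ => this i), Finset.sum_add_distrib,
      ← Finset.sum_mul, ← hEdef]
    ring
  -- arrival times are at most τ
  have hle : ∀ k : Fin (d+1), tf k + d' ≤ τ := by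
    intro k
    rw [hτ]
    by_cases h : (k : ℕ) < d
    · have : tf k = Tin + x ⟨k, h⟩ := by simp [htf, h]
      rw [this]
      have h1 := hxM ⟨k, h⟩
      have h2 := le_abs_self (x ⟨k, h⟩)
      linarith
    · have : tf k = Tin := by simp [htf, h]
      rw [this]
      linarith
  set S : Finset (Fin (d+1)) := Finset.univ.filter (fun k => tf k + d' < τ) with hSdef
  have hmemS : ∀ k, k ∈ S ↔ tf k + d' < τ := by
    intro k
    simp [hSdef]
  have hlast : Fin.last d ∈ S := by
    rw [hmemS, htl, hτ]
    linarith
  have hne : S.Nonempty := ⟨_, hlast⟩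
  have hnotS : ∀ k ∉ S, tf k + d' = τ := by
    intro k hk
    rw [hmemS] at hk
    exact le_antisymm (hle k) (not_lt.mp hk)
  -- every neuron not in S has nonpositive weight
  have hCneg : ∀ k ∉ S, wf k ≤ 0 := by
    intro k hk
    have hkd : (k : ℕ) < d := by
      by_contra h
      have : k = Fin.last d := Fin.eq_last_of_not_lt (by omega)
      exact hk (this ▸ hlast)
    have heq : Tin + x ⟨k, hkd⟩ + d' = τ := by
      have := hnotS k hk
      rwa [show tf k = Tin + x ⟨k, hkd⟩ by simp [htf, hkd]] at this
    rw [hτ] at heq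
    have hxk : x ⟨k, hkd⟩ = θ + E := by linarith
    have hxkM : x ⟨k, hkd⟩ ≤ M := le_trans (le_abs_self _) (hxM _)
    -- tightness: E = -(d*K*M) and s + |s| = 0, so x k = M
    have hEeq : E = -((d : ℝ) * K * M) := by
      rw [hθdef] at hxk
      linarith [hE, hs, hxkM]
    have hsz : s + |s| = 0 := by
      rw [hθdef] at hxk
      linarith [hE, hs, hxkM]
    have hxkMeq : x ⟨k, hkd⟩ = M := by
      rw [hxk, hθdef, hEeq]
      linear_combination hsz
    -- per-term tightness in the sum E
    have hall : ∀ j ∈ Finset.univ, C j * x j = -(K * M) := by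
      have hsum : ∑ j : Fin d, -(K * M) = ∑ j, C j * x j := by
        rw [← hEdef, hEeq, Finset.sum_const, Finset.card_univ, Fintype.card_fin]
        push_cast
        ring
      have := (Finset.sum_eq_sum_iff_of_le
        (fun j (_ : j ∈ Finset.univ) => hterm j)).mp hsum
      intro j hj
      exact (this j hj).symm
    have hCk : C ⟨k, hkd⟩ * M = -(K * M) := by
      have := hall ⟨k, hkd⟩ (Finset.mem_univ _)
      rwa [hxkMeq] at this
    have hCkK : C ⟨k, hkd⟩ = -K := by
      have hMne : M ≠ 0 := ne_of_gt hM
      field_simp at hCk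
      rcases mul_eq_zero.mp (by rw [hCk]; ring : (C ⟨k, hkd⟩ + K) * M = 0) with h | h
      · linarith
      · exact absurd h hMne
    have : wf k = C ⟨k, hkd⟩ := by simp [hwf, hkd]
    rw [this, hCkK]
    linarith
  have hScW : ∑ k ∈ Sᶜ, wf k ≤ 0 :=
    Finset.sum_nonpos (fun k hk => hCneg k (Finset.mem_compl.mp hk))
  have hsplit : ∑ k ∈ S, wf k + ∑ k ∈ Sᶜ, wf k = 1 := by
    rw [Finset.sum_add_sum_compl, hWsum]
  have hSpos : 0 < ∑ k ∈ S, wf k := by linarith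
  have hScT : ∑ k ∈ Sᶜ, wf k * (tf k + d') = (∑ k ∈ Sᶜ, wf k) * τ := by
    rw [Finset.sum_mul]
    refine Finset.sum_congr rfl (fun k hk => ?_)
    rw [hnotS k (Finset.mem_compl.mp hk)]
  have hsplitT : ∑ k ∈ S, wf k * (tf k + d') + ∑ k ∈ Sᶜ, wf k * (tf k + d')
      = Tin + d' + E := by
    rw [Finset.sum_add_sum_compl, hWTsum]
  refine ⟨S, hne, hSpos, ?_, ?_, ?_⟩
  · intro k hk
    exact (hmemS k).mp hk
  · intro k hk
    exact le_of_eq (hnotS k hk).symm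
  · rw [eq_div_iff (ne_of_gt hSpos)]
    have h1 : ∑ k ∈ S, wf k * (tf k + d')
        = Tin + d' + E - (∑ k ∈ Sᶜ, wf k) * τ := by
      rw [← hScT]; linarith
    have h2 : ∑ k ∈ S, wf k = 1 - ∑ k ∈ Sᶜ, wf k := by linarith
    rw [h1, h2, hτ]
    ring
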